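/- arXiv:2408.06983 — 3 statements merged into one kernel-verified Lean document; each statement's English description precedes it below -/
import Mathlib

section
/- Let p be a linear predicate and σ : [0,T] → ℝ^V a continuous piecewise-linear signal (interpolation of a timed state sequence). Then there exists a finite time sequence 0 = γ_0 < γ_1 < ... < γ_N = T such that for each i ∈ [1,N]: (1) σ is affine on [γ_{i-1}, γ_i], and (2) if (σ(γ_{i-1}), σ(γ_i)) is a δ-crossing pair with respect to p, then it is stationary. -/
/-! On each segment of the timed state sequence, `f t = cᵀσ(t) + b` is affine in `t`.
Add to the breakpoints one zero of `f` in every segment on which `f` vanishes somewhere.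
A δ-crossing pair that is not stationary is a strict sign change of `f` between consecutive
breakpoints; then `f` is a nonconstant affine function on the enclosing segment, so its only
zero, which was added as a breakpoint, lies strictly between them: impossible. -/

open Set

theorem Finset.exists_strictMono_fin_range_eq {α : Type*} [LinearOrder α] {F : Finset α}
    {a b : α} (ha : IsLeast (F : Set α) a) (hb : IsGreatest (F : Set α) b) :
    ∃ (N : ℕ) (γ : Fin (N + 1) → α), StrictMono γ ∧ γ 0 = a ∧ γ (Fin.last N) = b ∧
      Set.range γ = F := by
  obtain ⟨N, hN⟩ : ∃ N, F.card = N + 1 :=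
    Nat.exists_eq_add_one.mpr (Finset.card_pos.mpr ⟨a, ha.1⟩)
  set γ : Fin (N + 1) → α := ⇑(F.orderEmbOfFin hN)
  have hrange : Set.range γ = F := F.range_orderEmbOfFin hN
  have hγ : StrictMono γ := (F.orderEmbOfFin hN).strictMono
  obtain ⟨m, hm⟩ : a ∈ Set.range γ := hrange ▸ ha.1
  obtain ⟨n, hn⟩ : b ∈ Set.range γ := hrange ▸ hb.1
  refine ⟨N, γ, hγ, ?_, ?_, hrange⟩
  · exact le_antisymm (hm ▸ hγ.monotone (Fin.zero_le m)) (ha.2 (hrange ▸ mem_range_self 0))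
  · exact le_antisymm (hb.2 (hrange ▸ mem_range_self _)) (hn ▸ hγ.monotone (Fin.le_last n))

theorem StrictMono.apply_notMem_Ioo_castSucc_succ {α : Type*} [LinearOrder α] {N : ℕ}
    {γ : Fin (N + 1) → α} (hγ : StrictMono γ) (k : Fin N) (m : Fin (N + 1)) :
    γ m ∉ Ioo (γ k.castSucc) (γ k.succ) := fun ⟨h₁, h₂⟩ =>
  (hγ.lt_iff_lt.mp h₂).not_ge (Fin.castSucc_lt_iff_succ_le.mp (hγ.lt_iff_lt.mp h₁))

theorem Fin.exists_Icc_subset_Icc_castSucc_succ {α : Type*} [LinearOrder α] {M : ℕ}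
    {γ : Fin (M + 1) → α} {x y : α} (hxy : x < y) (hx : γ 0 ≤ x)
    (hy : y ≤ γ (Fin.last M)) (hgap : ∀ j, γ j ∉ Ioo x y) :
    ∃ i : Fin M, Icc x y ⊆ Icc (γ i.castSucc) (γ i.succ) := by
  classical
  -- the first breakpoint to the right of `x` closes the segment containing `[x, y]`
  set S := Finset.univ.filter fun j => x < γ j
  have hS : S.Nonempty := ⟨Fin.last M, by simpa [S] using hxy.trans_le hy⟩
  obtain ⟨i, hi⟩ : ∃ i : Fin M, i.succ = S.min' hS := by
    refine Fin.exists_succ_eq_of_ne_zero fun h0 => ?_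
    have := (Finset.mem_filter.mp (h0 ▸ S.min'_mem hS)).2
    exact hx.not_gt this
  have hxi : x < γ i.succ := by
    have := S.min'_mem hS
    rw [← hi] at this
    exact (Finset.mem_filter.mp this).2
  have hix : γ i.castSucc ≤ x := by
    by_contra! h
    have := S.min'_le _ (Finset.mem_filter.mpr ⟨Finset.mem_univ _, h⟩)
    exact (hi ▸ this).not_gt Fin.castSucc_lt_succ
  have hyi : y ≤ γ i.succ := not_lt.mp fun h => hgap _ ⟨hxi, h⟩
  exact ⟨i, Icc_subset_Icc hix hyi⟩

theorem StrictMono.exists_refinement {α : Type*} [LinearOrder α] {M : ℕ}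
    {γ' : Fin (M + 1) → α} (hmono : StrictMono γ') (z : Fin M → α)
    (hz : ∀ i, z i ∈ Icc (γ' 0) (γ' (Fin.last M))) :
    ∃ (N : ℕ) (γ : Fin (N + 1) → α), StrictMono γ ∧ γ 0 = γ' 0 ∧
      γ (Fin.last N) = γ' (Fin.last M) ∧ ∀ k : Fin N, ∃ i : Fin M,
        Icc (γ k.castSucc) (γ k.succ) ⊆ Icc (γ' i.castSucc) (γ' i.succ) ∧
        ∀ l, z l ∉ Ioo (γ k.castSucc) (γ k.succ) := by
  classical
  set F : Finset α := Finset.univ.image γ' ∪ Finset.univ.image z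
  have hF : (F : Set α) ⊆ Icc (γ' 0) (γ' (Fin.last M)) := by
    intro x hx
    simp only [F, Finset.coe_union, Finset.coe_image, Finset.coe_univ, image_univ] at hx
    rcases hx with ⟨j, rfl⟩ | ⟨i, rfl⟩
    · exact ⟨hmono.monotone (Fin.zero_le j), hmono.monotone (Fin.le_last j)⟩
    · exact hz i
  obtain ⟨N, γ, hγ, hγ0, hγN, hrange⟩ := F.exists_strictMono_fin_range_eq
    ⟨by simp [F], fun x hx => (hF hx).1⟩ ⟨by simp [F], fun x hx => (hF hx).2⟩
  refine ⟨N, γ, hγ, hγ0, hγN, fun k => ?_⟩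
  have hgap : ∀ x ∈ F, x ∉ Ioo (γ k.castSucc) (γ k.succ) := fun x hx => by
    obtain ⟨m, rfl⟩ : x ∈ Set.range γ := hrange ▸ hx
    exact hγ.apply_notMem_Ioo_castSucc_succ k m
  obtain ⟨i, hi⟩ := Fin.exists_Icc_subset_Icc_castSucc_succ (hγ Fin.castSucc_lt_succ)
    (hF (hrange ▸ mem_range_self _)).1 (hF (hrange ▸ mem_range_self _)).2
    (fun j => hgap _ (by simp [F]))
  exact ⟨i, hi, fun l => hgap _ (by simp [F])⟩

theorem nonneg_and_nonneg_or_mul_neg_of_not_le_iff_le {δ a b : ℝ} (hδ : 0 < δ)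
    (h : ¬ (δ ≤ a ↔ δ ≤ b)) : (0 ≤ a ∧ 0 ≤ b) ∨ a * b < 0 := by
  refine or_iff_not_imp_right.mpr fun hab => ?_
  rw [not_lt] at hab
  rcases le_or_gt δ a with ha | ha
  · have hb : b < δ := lt_of_not_ge fun hb => h (iff_of_true ha hb)
    exact ⟨by linarith, by nlinarith⟩
  · have hb : δ ≤ b := le_of_not_gt fun hb => h (iff_of_false ha.not_ge hb.not_ge)
    exact ⟨by nlinarith, by linarith⟩

theorem mem_Ioo_of_add_mul_eq_zero_of_mul_neg {A B x y z : ℝ} (hxy : x ≤ y)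
    (hz : A + z * B = 0) (hneg : (A + x * B) * (A + y * B) < 0) : z ∈ Ioo x y := by
  have hA : A = -(z * B) := by linarith
  have hprod : (x - z) * (y - z) * B ^ 2 < 0 := by rw [hA] at hneg; linarith
  have : (x - z) * (y - z) < 0 := by nlinarith [sq_nonneg B]
  constructor <;> nlinarith

theorem exists_mem_Ioo_add_mul_eq_zero_of_mul_neg {A B x y : ℝ} (hxy : x ≤ y)
    (hneg : (A + x * B) * (A + y * B) < 0) : ∃ z ∈ Ioo x y, A + z * B = 0 := by
  have hB : B ≠ 0 := by
    rintro rfl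
    simp only [mul_zero, add_zero] at hneg
    exact (mul_self_nonneg A).not_gt hneg
  have hz : A + -A / B * B = 0 := by field_simp; ring
  exact ⟨-A / B, mem_Ioo_of_add_mul_eq_zero_of_mul_neg hxy hz hneg, hz⟩

theorem sum_mul_add_smul_apply {V : Type*} [Fintype V] (c u w : V → ℝ) (t : ℝ) :
    ∑ j, c j * (u + t • w) j = ∑ j, c j * u j + t * ∑ j, c j * w j := by
  simp only [Pi.add_apply, Pi.smul_apply, smul_eq_mul, mul_add, Finset.sum_add_distrib,
    mul_left_comm _ t, ← Finset.mul_sum]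

theorem stmt6_general {V : Type*} [Fintype V] (c : V → ℝ) (b δ T : ℝ) (hδ : 0 < δ)
    (M : ℕ) (γ' : Fin (M + 1) → ℝ) (hmono : StrictMono γ')
    (h0 : γ' 0 = 0) (hlast : γ' (Fin.last M) = T)
    (σ : ℝ → V → ℝ)
    (haff : ∀ i : Fin M, ∃ u w : V → ℝ,
      ∀ t ∈ Set.Icc (γ' i.castSucc) (γ' i.succ), σ t = u + t • w) :
    ∃ N : ℕ, ∃ γ : Fin (N + 1) → ℝ, StrictMono γ ∧ γ 0 = 0 ∧ γ (Fin.last N) = T ∧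
      ∀ i : Fin N,
        (∃ u w : V → ℝ, ∀ t ∈ Set.Icc (γ i.castSucc) (γ i.succ), σ t = u + t • w) ∧
        (¬ ((δ ≤ ∑ j, c j * σ (γ i.castSucc) j + b) ↔ (δ ≤ ∑ j, c j * σ (γ i.succ) j + b)) →
          0 ≤ ∑ j, c j * σ (γ i.castSucc) j + b ∧ 0 ≤ ∑ j, c j * σ (γ i.succ) j + b) := by
  classical
  set f : ℝ → ℝ := fun t => ∑ j, c j * σ t j + b
  have hzero : ∀ i : Fin M, ∃ z ∈ Icc (γ' i.castSucc) (γ' i.succ),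
      (∃ t ∈ Icc (γ' i.castSucc) (γ' i.succ), f t = 0) → f z = 0 := fun i => by
    by_cases h : ∃ t ∈ Icc (γ' i.castSucc) (γ' i.succ), f t = 0
    · obtain ⟨t, ht, hft⟩ := h
      exact ⟨t, ht, fun _ => hft⟩
    · exact ⟨γ' i.castSucc, left_mem_Icc.mpr (hmono Fin.castSucc_lt_succ).le, fun h' => (h h').elim⟩
  choose z hz_mem hz_zero using hzero
  have hγ'_mem (j : Fin (M + 1)) : γ' j ∈ Icc (γ' 0) (γ' (Fin.last M)) :=
    ⟨hmono.monotone (Fin.zero_le j), hmono.monotone (Fin.le_last j)⟩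
  obtain ⟨N, γ, hγ, hγ0, hγN, hrefine⟩ := hmono.exists_refinement z fun i =>
    Icc_subset_Icc (hγ'_mem _).1 (hγ'_mem _).2 (hz_mem i)
  refine ⟨N, γ, hγ, hγ0.trans h0, hγN.trans hlast, fun k => ?_⟩
  obtain ⟨i, hi, hgap⟩ := hrefine k
  obtain ⟨u, w, huw⟩ := haff i
  refine ⟨⟨u, w, fun t ht => huw t (hi ht)⟩, fun hcross => ?_⟩
  have hf : ∀ t ∈ Icc (γ' i.castSucc) (γ' i.succ),
      f t = (∑ j, c j * u j + b) + t * ∑ j, c j * w j := fun t ht => by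
    simp only [f, huw t ht, sum_mul_add_smul_apply]
    ring
  refine (nonneg_and_nonneg_or_mul_neg_of_not_le_iff_le hδ hcross).resolve_right fun hneg => ?_
  have hle := (hγ k.castSucc_lt_succ).le
  change f _ * f _ < 0 at hneg
  rw [hf _ (hi (left_mem_Icc.mpr hle)), hf _ (hi (right_mem_Icc.mpr hle))] at hneg
  obtain ⟨t, ht, hft⟩ := exists_mem_Ioo_add_mul_eq_zero_of_mul_neg hle hneg
  have htseg := hi (Ioo_subset_Icc_self ht)
  have hzi := hz_zero i ⟨t, htseg, (hf t htseg).trans hft⟩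
  rw [hf _ (hz_mem i)] at hzi
  exact hgap i (mem_Ioo_of_add_mul_eq_zero_of_mul_neg hle hzi hneg)

/-- for a continuous piecewise-linear signal `σ` (affine on the
segments of a timed state sequence) and a linear predicate `p` with δ-tightening
`p^δ`, there exists a refined time sequence `0 = γ_0 < ... < γ_N = T` such that
on each segment `σ` is affine and every δ-crossing endpoint pair is stationary. -/
theorem stmt6 {V : Type*} [Fintype V] (c : V → ℝ) (b δ T : ℝ) (hδ : 0 < δ) (hT : 0 < T)
    (M : ℕ) (γ' : Fin (M + 1) → ℝ) (hmono : StrictMono γ')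
    (h0 : γ' 0 = 0) (hlast : γ' (Fin.last M) = T)
    (σ : ℝ → V → ℝ)
    (haff : ∀ i : Fin M, ∃ u w : V → ℝ,
      ∀ t ∈ Set.Icc (γ' i.castSucc) (γ' i.succ), σ t = u + t • w) :
    ∃ N : ℕ, ∃ γ : Fin (N + 1) → ℝ, StrictMono γ ∧ γ 0 = 0 ∧ γ (Fin.last N) = T ∧
      ∀ i : Fin N,
        (∃ u w : V → ℝ, ∀ t ∈ Set.Icc (γ i.castSucc) (γ i.succ), σ t = u + t • w) ∧
        (¬ ((δ ≤ ∑ j, c j * σ (γ i.castSucc) j + b) ↔ (δ ≤ ∑ j, c j * σ (γ i.succ) j + b)) →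
          0 ≤ ∑ j, c j * σ (γ i.castSucc) j + b ∧ 0 ≤ ∑ j, c j * σ (γ i.succ) j + b) :=
  stmt6_general c b δ T hδ M γ' hmono h0 hlast σ haff
end

section
/- Let σ be a signal, φ an STL formula in negation normal form with all atomic predicates being closed linear predicates, and δ > 0. If σ satisfies the δ-tightening φ^δ under the Boolean STL semantics, then the robust semantics satisfies [[σ, φ]] ≥ δ. -/
/-- Shift (t-postfix) of a signal: `shift σ t = σ^t`. -/
def shift {V : Type} (σ : ℝ → V → ℝ) (t : ℝ) : ℝ → V → ℝ := fun s => σ (t + s)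

/-- STL formulas in negation normal form over variables `V`: atoms are closed
linear predicates `cᵀx + b ≥ 0`, negated atoms `p⁻` are `−cᵀx − b ≥ 0`. -/
inductive STL (V : Type) where
  | tt : STL V
  | ff : STL V
  | atom (c : V → ℝ) (b : ℝ) : STL V
  | natom (c : V → ℝ) (b : ℝ) : STL V
  | conj (φ ψ : STL V) : STL V
  | disj (φ ψ : STL V) : STL V
  | ev (I : Set ℝ) (φ : STL V) : STL V
  | al (I : Set ℝ) (φ : STL V) : STL V
  | untl (I : Set ℝ) (φ ψ : STL V) : STL V
  | rel (I : Set ℝ) (φ ψ : STL V) : STL V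

/-- Boolean STL semantics (Def. A.1). -/
def sat {V : Type} [Fintype V] (σ : ℝ → V → ℝ) : STL V → Prop
  | .tt => True
  | .ff => False
  | .atom c b => 0 ≤ ∑ i, c i * σ 0 i + b
  | .natom c b => 0 ≤ -(∑ i, c i * σ 0 i) - b
  | .conj φ ψ => sat σ φ ∧ sat σ ψ
  | .disj φ ψ => sat σ φ ∨ sat σ ψ
  | .ev I φ => ∃ t ∈ I, sat (shift σ t) φ
  | .al I φ => ∀ t ∈ I, sat (shift σ t) φ
  | .untl I φ ψ => ∃ t ∈ I, sat (shift σ t) ψ ∧ ∀ t' ∈ Set.Ico 0 t, sat (shift σ t') φ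
  | .rel I φ ψ => ∀ t ∈ I, sat (shift σ t) ψ ∨ ∃ t' ∈ Set.Ico 0 t, sat (shift σ t') φ

/-- Robust STL semantics (Def. A.2), valued in the extended reals. -/
noncomputable def rob {V : Type} [Fintype V] (σ : ℝ → V → ℝ) : STL V → EReal
  | .tt => ⊤
  | .ff => ⊥
  | .atom c b => ((∑ i, c i * σ 0 i + b : ℝ) : EReal)
  | .natom c b => ((-(∑ i, c i * σ 0 i) - b : ℝ) : EReal)
  | .conj φ ψ => min (rob σ φ) (rob σ ψ)
  | .disj φ ψ => max (rob σ φ) (rob σ ψ)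
  | .ev I φ => ⨆ t ∈ I, rob (shift σ t) φ
  | .al I φ => ⨅ t ∈ I, rob (shift σ t) φ
  | .untl I φ ψ => ⨆ t ∈ I, min (rob (shift σ t) ψ) (⨅ t' ∈ Set.Ico 0 t, rob (shift σ t') φ)
  | .rel I φ ψ => ⨅ t ∈ I, max (rob (shift σ t) ψ) (⨆ t' ∈ Set.Ico 0 t, rob (shift σ t') φ)

/-- δ-tightening of an NNF STL formula: atoms `cᵀx + b ≥ 0` become `cᵀx + b ≥ δ`,
negated atoms `−cᵀx − b ≥ 0` become `−cᵀx − b ≥ δ`. -/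
def tighten {V : Type} (δ : ℝ) : STL V → STL V
  | .tt => .tt
  | .ff => .ff
  | .atom c b => .atom c (b - δ)
  | .natom c b => .natom c (b + δ)
  | .conj φ ψ => .conj (tighten δ φ) (tighten δ ψ)
  | .disj φ ψ => .disj (tighten δ φ) (tighten δ ψ)
  | .ev I φ => .ev I (tighten δ φ)
  | .al I φ => .al I (tighten δ φ)
  | .untl I φ ψ => .untl I (tighten δ φ) (tighten δ ψ)
  | .rel I φ ψ => .rel I (tighten δ φ) (tighten δ ψ)

/-- Prop. 4.7: if a signal satisfies the δ-tightening `φ^δ` of an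
NNF STL formula `φ` under the Boolean semantics, then its robustness for `φ` is
at least `δ`. -/
theorem stmt8 {V : Type} [Fintype V] (σ : ℝ → V → ℝ) (φ : STL V) (δ : ℝ) (hδ : 0 < δ)
    (h : sat σ (tighten δ φ)) : (δ : EReal) ≤ rob σ φ := by
  induction φ generalizing σ with
  | tt => exact le_top
  | ff => exact absurd h (by simp [sat, tighten])
  | atom c b =>
      simp only [tighten, sat] at h
      simp only [rob]
      exact_mod_cast (by linarith : δ ≤ ∑ i, c i * σ 0 i + b)
  | natom c b =>
      simp only [tighten, sat] at h
      simp only [rob]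
      exact_mod_cast (by linarith : δ ≤ -(∑ i, c i * σ 0 i) - b)
  | conj φ ψ ihφ ihψ =>
      exact le_min (ihφ σ h.1) (ihψ σ h.2)
  | disj φ ψ ihφ ihψ =>
      rcases h with h | h
      · exact le_max_of_le_left (ihφ σ h)
      · exact le_max_of_le_right (ihψ σ h)
  | ev I φ ih =>
      obtain ⟨t, ht, hsat⟩ := h
      exact le_trans (ih _ hsat) (le_iSup₂ (f := fun t _ => rob (shift σ t) φ) t ht)
  | al I φ ih =>
      exact le_iInf₂ fun t ht => ih _ (h t ht)
  | untl I φ ψ ihφ ihψ =>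
      obtain ⟨t, ht, hψ, hφ⟩ := h
      refine le_trans ?_ (le_iSup₂ (f := fun t _ => min (rob (shift σ t) ψ)
        (⨅ t' ∈ Set.Ico 0 t, rob (shift σ t') φ)) t ht)
      exact le_min (ihψ _ hψ) (le_iInf₂ fun t' ht' => ihφ _ (hφ t' ht'))
  | rel I φ ψ ihφ ihψ =>
      refine le_iInf₂ fun t ht => ?_
      rcases h t ht with h | ⟨t', ht', h⟩
      · exact le_max_of_le_left (ihψ _ h)
      · exact le_max_of_le_right (le_trans (ihφ _ h)
          (le_iSup₂ (f := fun t' _ => rob (shift σ t') φ) t' ht'))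
end

section
/- Unbounded until satisfies the recursion over a stable partition: let Γ = (γ_0 < ... < γ_N) be a time sequence such that for every subformula ψ of φ₁ U φ₂ and every interval Γ_i = [γ_{i-1}, γ_i], the truth value of σ^t ⊨ ψ is constant for t ∈ Γ_i. Then for any t in the interior of Γ_i with i < N: σ^t ⊨ φ₁ U_{[0,∞)} φ₂ holds iff (σ^t ⊨ φ₂) or (σ^t ⊨ φ₁ and σ^{t'} ⊨ φ₁ U_{[0,∞)} φ₂ for t' in Γ_{i+1}). -/
/-- The list of subformulas of an STL formula. -/
def subf {V : Type} : STL V → List (STL V)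
  | .tt => [.tt]
  | .ff => [.ff]
  | .atom c b => [.atom c b]
  | .natom c b => [.natom c b]
  | .conj φ ψ => .conj φ ψ :: (subf φ ++ subf ψ)
  | .disj φ ψ => .disj φ ψ :: (subf φ ++ subf ψ)
  | .ev I φ => .ev I φ :: subf φ
  | .al I φ => .al I φ :: subf φ
  | .untl I φ ψ => .untl I φ ψ :: (subf φ ++ subf ψ)
  | .rel I φ ψ => .rel I φ ψ :: (subf φ ++ subf ψ)

lemma shift_shift {V : Type} (σ : ℝ → V → ℝ) (t s : ℝ) :
    shift (shift σ t) s = shift σ (t + s) := by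
  funext r; simp [shift, add_assoc]

lemma mem_subf_self {V : Type} (φ : STL V) : φ ∈ subf φ := by
  cases φ <;> simp [subf]

lemma sat_untl' {V : Type} [Fintype V] (σ : ℝ → V → ℝ) (φ ψ : STL V) (t : ℝ) :
    sat (shift σ t) (STL.untl (Set.Ici 0) φ ψ) ↔
      ∃ w, t ≤ w ∧ sat (shift σ w) ψ ∧ ∀ v, t ≤ v → v < w → sat (shift σ v) φ := by
  constructor
  · rintro ⟨s, hs, h2, h1⟩
    refine ⟨t + s, by simpa using (Set.mem_Ici.mp hs), by rwa [← shift_shift], ?_⟩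
    intro v hv1 hv2
    have := h1 (v - t) ⟨by linarith, by linarith⟩
    rw [shift_shift] at this
    simpa using this
  · rintro ⟨w, hw, h2, h1⟩
    refine ⟨w - t, Set.mem_Ici.mpr (by linarith), ?_, ?_⟩
    · rw [shift_shift]; simpa using h2
    · intro u hu
      rw [shift_shift]
      exact h1 (t + u) (by linarith [hu.1]) (by linarith [hu.2])

/-- the unbounded until satisfies the expected recursion over a
stable partition `γ_0 < … < γ_N`: on the interior of the `i`-th interval
(`i < N`), `σ^t ⊨ φ₁ U φ₂` iff `σ^t ⊨ φ₂`, or `σ^t ⊨ φ₁` and `σ^{t'} ⊨ φ₁ U φ₂`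
for `t'` in the next interval. -/
theorem stmt14 {V : Type} [Fintype V] (σ : ℝ → V → ℝ) (φ₁ φ₂ : STL V)
    (N : ℕ) (hN : 1 ≤ N) (γ : ℕ → ℝ) (hmono : ∀ j < N, γ j < γ (j + 1))
    (hconst : ∀ ψ ∈ subf (STL.untl (Set.Ici 0) φ₁ φ₂),
      ∀ i, 1 ≤ i → i ≤ N → ∀ t ∈ Set.Icc (γ (i - 1)) (γ i), ∀ t' ∈ Set.Icc (γ (i - 1)) (γ i),
        (sat (shift σ t) ψ ↔ sat (shift σ t') ψ)) :
    ∀ i, 1 ≤ i → i < N → ∀ t ∈ Set.Ioo (γ (i - 1)) (γ i), ∀ t' ∈ Set.Icc (γ i) (γ (i + 1)),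
      (sat (shift σ t) (STL.untl (Set.Ici 0) φ₁ φ₂) ↔
        (sat (shift σ t) φ₂ ∨
          (sat (shift σ t) φ₁ ∧ sat (shift σ t') (STL.untl (Set.Ici 0) φ₁ φ₂)))) := by

  intro i hi1 hiN t ht t' ht'
  obtain ⟨ht1, ht2⟩ := ht
  obtain ⟨ht'1, ht'2⟩ := ht'
  have hmemU : (STL.untl (Set.Ici 0) φ₁ φ₂) ∈ subf (STL.untl (Set.Ici 0) φ₁ φ₂) :=
    mem_subf_self _
  have hmem1 : φ₁ ∈ subf (STL.untl (Set.Ici 0) φ₁ φ₂) := by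
    simp [subf]; exact Or.inr (Or.inl (mem_subf_self φ₁))
  have hmem2 : φ₂ ∈ subf (STL.untl (Set.Ici 0) φ₁ φ₂) := by
    simp [subf]; exact Or.inr (Or.inr (mem_subf_self φ₂))
  have Ci : ∀ ψ ∈ subf (STL.untl (Set.Ici 0) φ₁ φ₂),
      ∀ a ∈ Set.Icc (γ (i-1)) (γ i), ∀ b ∈ Set.Icc (γ (i-1)) (γ i),
        (sat (shift σ a) ψ ↔ sat (shift σ b) ψ) :=
    fun ψ hψ => hconst ψ hψ i hi1 (le_of_lt hiN)
  have Ci1 : ∀ ψ ∈ subf (STL.untl (Set.Ici 0) φ₁ φ₂),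
      ∀ a ∈ Set.Icc (γ i) (γ (i+1)), ∀ b ∈ Set.Icc (γ i) (γ (i+1)),
        (sat (shift σ a) ψ ↔ sat (shift σ b) ψ) := by
    have := hconst
    intro ψ hψ a ha b hb
    have h := hconst ψ hψ (i+1) (by omega) (by omega)
    simpa using h a (by simpa using ha) b (by simpa using hb)
  constructor
  · intro hsat
    rw [sat_untl'] at hsat
    obtain ⟨w, htw, h2, h1⟩ := hsat
    by_cases hw : w ≤ γ i
    · left
      exact (Ci φ₂ hmem2 w ⟨le_trans ht1.le htw, hw⟩ t ⟨ht1.le, ht2.le⟩).mp h2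
    · right
      push_neg at hw
      refine ⟨h1 t le_rfl (lt_trans ht2 hw), ?_⟩
      have hUγ : sat (shift σ (γ i)) (STL.untl (Set.Ici 0) φ₁ φ₂) := by
        rw [sat_untl']
        exact ⟨w, hw.le, h2, fun v hv1 hv2 => h1 v (le_trans ht2.le hv1) hv2⟩
      exact (Ci1 _ hmemU (γ i) ⟨le_rfl, (hmono i hiN).le⟩ t' ⟨ht'1, ht'2⟩).mp hUγ
  · rintro (h2 | ⟨h1, hU'⟩)
    · rw [sat_untl']
      exact ⟨t, le_rfl, h2, fun v hv1 hv2 => absurd hv1 (not_le.mpr hv2)⟩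
    · have hφ1i : ∀ v ∈ Set.Icc (γ (i-1)) (γ i), sat (shift σ v) φ₁ :=
        fun v hv => (Ci φ₁ hmem1 t ⟨ht1.le, ht2.le⟩ v hv).mp h1
      rw [sat_untl'] at hU' ⊢
      obtain ⟨w, ht'w, h2', h1'⟩ := hU'
      by_cases hs : t' < w
      · have hφ1t' : sat (shift σ t') φ₁ := h1' t' le_rfl hs
        have hφ1i1 : ∀ v ∈ Set.Icc (γ i) (γ (i+1)), sat (shift σ v) φ₁ :=
          fun v hv => (Ci1 φ₁ hmem1 t' ⟨ht'1, ht'2⟩ v hv).mp hφ1t'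
        refine ⟨w, by linarith, h2', fun v hv1 hv2 => ?_⟩
        rcases lt_or_ge v (γ i) with h | h
        · exact hφ1i v ⟨by linarith, h.le⟩
        · rcases lt_or_ge v t' with h' | h'
          · exact hφ1i1 v ⟨h, by linarith⟩
          · exact h1' v h' hv2
      · have hweq : w = t' := le_antisymm (not_lt.mp hs) ht'w
        subst hweq
        have h2γ : sat (shift σ (γ i)) φ₂ :=
          (Ci1 φ₂ hmem2 w ⟨ht'1, ht'2⟩ (γ i) ⟨le_rfl, (hmono i hiN).le⟩).mp h2'
        exact ⟨γ i, ht2.le, h2γ, fun v hv1 hv2 => hφ1i v ⟨by linarith, hv2.le⟩⟩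
end
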